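/- arXiv:2302.00037 — 2 statements merged into one kernel-verified Lean document; each statement's English description precedes it below -/
import Mathlib

section
/- For any weighted graph G on V with |V| = n and any binary tree T with leaf set V: ω_G(T) = (1/2)·[ Σ over internal splits S → (S₁,S₂) of T of (|S₂|·w(S₁, V∖S₁) + |S₁|·w(S₂, V∖S₂)) ] + (1/2)·Σ_{v∈V} w({v}, V∖{v}). -/
/-!
Write `P(T) = Σ_{u,v ∈ leaves T} w(u,v)·|T[u∧v]|`. At a split `S → (S₁,S₂)` the pairs separated
by the split contribute `|S|·(w(S₁,S₂) + w(S₂,S₁))`, and `w(Sᵢ, Sᵢᶜ) = w(S₁,S₂) + w(Sᵢ, Sᶜ)`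
(up to order). By induction on the tree this gives
`P(T) + |S|·w(S, Sᶜ) = splitCutSum w T + Σ_{v ∈ S} w({v}, {v}ᶜ)` for `S = leaves T`,
where a leaf contributes only its diagonal term `w(v,v) = 0`. At the root `S = V`, so the cut
term vanishes and `cost = P(T)/2`.
-/

open Finset

inductive BTree (V : Type) : Type
  | leaf : V → BTree V
  | node : BTree V → BTree V → BTree V
  deriving DecidableEq

namespace BTree

variable {V : Type} [DecidableEq V]

def leavesList : BTree V → List V
  | leaf x => [x]
  | node L R => L.leavesList ++ R.leavesList

def leaves (T : BTree V) : Finset V :=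
  T.leavesList.toFinset

def cluster : BTree V → V → V → Finset V
  | leaf x, _, _ => {x}
  | node L R, u, v =>
    if u ∈ L.leaves ∧ v ∈ L.leaves then L.cluster u v
    else if u ∈ R.leaves ∧ v ∈ R.leaves then R.cluster u v
    else (node L R).leaves

end BTree

section
variable {V : Type} [Fintype V] [DecidableEq V]

def IsHC (T : BTree V) : Prop :=
  T.leavesList.Nodup ∧ T.leaves = Finset.univ

def IsWeight (w : V → V → ℝ) : Prop :=
  (∀ u v, 0 ≤ w u v) ∧ (∀ u v, w u v = w v u) ∧ ∀ u, w u u = 0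

noncomputable def cost (w : V → V → ℝ) (T : BTree V) : ℝ :=
  (1 / 2) * ∑ u : V, ∑ v : V, w u v * ((T.cluster u v).card : ℝ)

noncomputable def optCost (w : V → V → ℝ) : ℝ :=
  sInf {c : ℝ | ∃ T : BTree V, IsHC T ∧ cost w T = c}

noncomputable def graphDist (w w' : V → V → ℝ) : ℝ :=
  (1 / 2) * ∑ u : V, ∑ v : V, |w u v - w' u v|

noncomputable def cutW (w : V → V → ℝ) (A B : Finset V) : ℝ :=
  ∑ a ∈ A, ∑ b ∈ B, w a b

def IsEdgeDP (A : (V → V → ℝ) → PMF (BTree V)) (ε : ℝ) : Prop :=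
  ∀ w w' : V → V → ℝ, IsWeight w → IsWeight w' → graphDist w w' ≤ 1 →
    ∀ S : Set (BTree V),
      (A w').toOuterMeasure S ≤ ENNReal.ofReal (Real.exp ε) * (A w).toOuterMeasure S

end

/-- The sum, over all internal splits `S → (S₁,S₂)` of the tree, of
`|S₂|·w(S₁, V∖S₁) + |S₁|·w(S₂, V∖S₂)`. -/
noncomputable def splitCutSum {V : Type} [Fintype V] [DecidableEq V]
    (w : V → V → ℝ) : BTree V → ℝ
  | .leaf _ => 0
  | .node L R =>
      (R.leaves.card : ℝ) * cutW w L.leaves (L.leaves)ᶜ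
        + (L.leaves.card : ℝ) * cutW w R.leaves (R.leaves)ᶜ
        + splitCutSum w L + splitCutSum w R

namespace BTree

variable {V : Type} [DecidableEq V]

@[simp]
lemma leaves_leaf (x : V) : (leaf x).leaves = {x} := by
  simp [leaves, leavesList]

@[simp]
lemma leaves_node (L R : BTree V) : (node L R).leaves = L.leaves ∪ R.leaves := by
  simp [leaves, leavesList]

lemma disjoint_leaves_of_nodup {L R : BTree V} (h : (node L R).leavesList.Nodup) :
    Disjoint L.leaves R.leaves := by
  rw [leaves, leaves, List.disjoint_toFinset_iff_disjoint]
  intro a haL haR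
  exact (List.nodup_append.mp h).2.2 a haL a haR rfl

variable {L R : BTree V} {u v : V}

lemma cluster_node_left (hu : u ∈ L.leaves) (hv : v ∈ L.leaves) :
    (node L R).cluster u v = L.cluster u v := by
  simp [cluster, hu, hv]

lemma cluster_node_right (hd : Disjoint L.leaves R.leaves) (hu : u ∈ R.leaves)
    (hv : v ∈ R.leaves) : (node L R).cluster u v = R.cluster u v := by
  simp [cluster, disjoint_right.mp hd hu, hu, hv]

lemma cluster_node_of_mem_left_of_mem_right (hd : Disjoint L.leaves R.leaves)
    (hu : u ∈ L.leaves) (hv : v ∈ R.leaves) : (node L R).cluster u v = (node L R).leaves := by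
  simp [cluster, disjoint_right.mp hd hv, disjoint_left.mp hd hu]

lemma cluster_node_of_mem_right_of_mem_left (hd : Disjoint L.leaves R.leaves)
    (hu : u ∈ R.leaves) (hv : v ∈ L.leaves) : (node L R).cluster u v = (node L R).leaves := by
  simp [cluster, disjoint_right.mp hd hu, disjoint_left.mp hd hv]

end BTree

section Cut

variable {V : Type} (w : V → V → ℝ)

lemma sum_sum_mul_const (A B : Finset V) (c : ℝ) :
    ∑ a ∈ A, ∑ b ∈ B, w a b * c = c * cutW w A B := by
  simp only [cutW, mul_sum, mul_comm]

variable [DecidableEq V]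

lemma cutW_union_left {A B : Finset V} (h : Disjoint A B) (C : Finset V) :
    cutW w (A ∪ B) C = cutW w A C + cutW w B C :=
  sum_union h

lemma cutW_union_right (C : Finset V) {A B : Finset V} (h : Disjoint A B) :
    cutW w C (A ∪ B) = cutW w C A + cutW w C B := by
  simp only [cutW, sum_union h, sum_add_distrib]

lemma cutW_compl_eq_add [Fintype V] {A B : Finset V} (h : Disjoint A B) :
    cutW w A Aᶜ = cutW w A B + cutW w A (A ∪ B)ᶜ := by
  have hcompl : Aᶜ = B ∪ (A ∪ B)ᶜ := by
    ext x
    have : x ∈ A → x ∉ B := fun hA => disjoint_left.mp h hA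
    simp only [mem_compl, mem_union]
    tauto
  rw [hcompl, cutW_union_right w A (disjoint_compl_right.mono_left subset_union_right)]

end Cut

section ClusterCost

variable {V : Type} [DecidableEq V]

/-- The Dasgupta sum over ordered pairs of leaves of `T`, i.e. twice the cost when `T` is a
hierarchical clustering. -/
noncomputable def clusterCost (w : V → V → ℝ) (T : BTree V) : ℝ :=
  ∑ u ∈ T.leaves, ∑ v ∈ T.leaves, w u v * ((T.cluster u v).card : ℝ)

lemma clusterCost_node (w : V → V → ℝ) {L R : BTree V} (hd : Disjoint L.leaves R.leaves) :
    clusterCost w (.node L R) = clusterCost w L + clusterCost w R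
      + ((L.leaves.card : ℝ) + R.leaves.card)
        * (cutW w L.leaves R.leaves + cutW w R.leaves L.leaves) := by
  have hcard : (((BTree.node L R).leaves.card : ℕ) : ℝ) = L.leaves.card + R.leaves.card := by
    rw [BTree.leaves_node, card_union_of_disjoint hd, Nat.cast_add]
  have hLL : ∑ u ∈ L.leaves, ∑ v ∈ L.leaves, w u v * (((BTree.node L R).cluster u v).card : ℝ)
      = clusterCost w L :=
    sum_congr rfl fun u hu => sum_congr rfl fun v hv => by rw [BTree.cluster_node_left hu hv]
  have hRR : ∑ u ∈ R.leaves, ∑ v ∈ R.leaves, w u v * (((BTree.node L R).cluster u v).card : ℝ)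
      = clusterCost w R :=
    sum_congr rfl fun u hu => sum_congr rfl fun v hv => by
      rw [BTree.cluster_node_right hd hu hv]
  have hLR : ∑ u ∈ L.leaves, ∑ v ∈ R.leaves, w u v * (((BTree.node L R).cluster u v).card : ℝ)
      = (L.leaves.card + R.leaves.card) * cutW w L.leaves R.leaves := by
    rw [← hcard, ← sum_sum_mul_const]
    exact sum_congr rfl fun u hu => sum_congr rfl fun v hv => by
      rw [BTree.cluster_node_of_mem_left_of_mem_right hd hu hv]
  have hRL : ∑ u ∈ R.leaves, ∑ v ∈ L.leaves, w u v * (((BTree.node L R).cluster u v).card : ℝ)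
      = (L.leaves.card + R.leaves.card) * cutW w R.leaves L.leaves := by
    rw [← hcard, ← sum_sum_mul_const]
    exact sum_congr rfl fun u hu => sum_congr rfl fun v hv => by
      rw [BTree.cluster_node_of_mem_right_of_mem_left hd hu hv]
  rw [clusterCost, BTree.leaves_node]
  simp only [sum_union hd, sum_add_distrib]
  rw [hLL, hRR, hLR, hRL]
  ring

lemma clusterCost_add_cutW_leaves [Fintype V] (w : V → V → ℝ) (hdiag : ∀ u, w u u = 0)
    (T : BTree V) (hT : T.leavesList.Nodup) :
    clusterCost w T + (T.leaves.card : ℝ) * cutW w T.leaves T.leavesᶜ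
      = splitCutSum w T + ∑ u ∈ T.leaves, cutW w {u} {u}ᶜ := by
  induction T with
  | leaf x => simp [clusterCost, splitCutSum, BTree.cluster, hdiag x]
  | node L R ihL ihR =>
    have hd := BTree.disjoint_leaves_of_nodup hT
    obtain ⟨hL, hR, -⟩ := List.nodup_append.mp hT
    have hLc := cutW_compl_eq_add w hd
    have hRc := cutW_compl_eq_add w hd.symm
    rw [union_comm] at hRc
    have hUc := cutW_union_left w hd (L.leaves ∪ R.leaves)ᶜ
    rw [clusterCost_node w hd, splitCutSum, BTree.leaves_node, card_union_of_disjoint hd,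
      sum_union hd]
    rw [hLc] at ihL ⊢
    rw [hRc] at ihR ⊢
    push_cast
    linear_combination ihL hL + ihR hR + (L.leaves.card + R.leaves.card : ℝ) * hUc

end ClusterCost

theorem cost_eq_cut_decomposition_general (V : Type) [Fintype V] [DecidableEq V]
    (w : V → V → ℝ) (hw : IsWeight w)
    (T : BTree V) (hT : IsHC T) :
    cost w T = (1 / 2) * splitCutSum w T + (1 / 2) * ∑ v : V, cutW w {v} ({v} : Finset V)ᶜ := by
  obtain ⟨hnodup, hleaves⟩ := hT
  have key := clusterCost_add_cutW_leaves w hw.2.2 T hnodup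
  have hcut : cutW w univ ∅ = 0 := by simp [cutW]
  rw [hleaves, compl_univ, hcut, mul_zero, add_zero] at key
  rw [← mul_add, ← key, clusterCost, hleaves, cost]

/-- Cut decomposition of the Dasgupta cost:
`ω_G(T) = (1/2)·Σ_{splits S→(S₁,S₂)} (|S₂|·w(S₁,V∖S₁) + |S₁|·w(S₂,V∖S₂))
          + (1/2)·Σ_{v∈V} w({v}, V∖{v})`. -/
theorem cost_eq_cut_decomposition (V : Type) [Fintype V] [DecidableEq V] (n : ℕ)
    (hcard : Fintype.card V = n) (w : V → V → ℝ) (hw : IsWeight w)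
    (T : BTree V) (hT : IsHC T) :
    cost w T = (1 / 2) * splitCutSum w T + (1 / 2) * ∑ v : V, cutW w {v} ({v} : Finset V)ᶜ :=
  cost_eq_cut_decomposition_general V w hw T hT
end

section
/- Let V = V₁ ⊔ V₂ ⊔ … ⊔ V_m be a partition of the vertex set (m ≥ 1, each V_i nonempty), and let G = (V,w) be a weighted graph with w(u,v) = 0 whenever u and v lie in different parts. Let G_i denote the weighted graph induced on V_i (with weight function the restriction of w). Then ω_G* ≤ Σ_{i=1}^m ω_{G_i}*, where for a one-vertex part the optimal cost is 0. -/
open Finset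

/-! Hang trees for the parts off a common spine (a caterpillar). Since the parts have disjoint
leaf sets, two vertices of the same part have the same cluster in the glued tree as in the tree
of their part, and pairs from different parts carry no weight; so the glued tree costs exactly
the sum of the parts' costs. Choosing the parts' trees within `ε / m` of their optima gives the
bound. -/

namespace BTree

variable {V W : Type}

def map (f : V → W) : BTree V → BTree W
  | leaf x => leaf (f x)
  | node L R => node (L.map f) (R.map f)

def caterpillar : BTree V → List (BTree V) → BTree V
  | S, [] => S
  | S, S' :: L => node S (caterpillar S' L)

theorem leavesList_map (f : V → W) : ∀ T : BTree V, (T.map f).leavesList = T.leavesList.map f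
  | leaf _ => rfl
  | node L R => by simp [map, leavesList, leavesList_map f L, leavesList_map f R]

theorem leavesList_caterpillar :
    ∀ (S : BTree V) (L : List (BTree V)),
      (caterpillar S L).leavesList = (S :: L).flatMap leavesList
  | _, [] => by simp [caterpillar]
  | S, S' :: L => by simp [caterpillar, leavesList, leavesList_caterpillar S' L]

variable [DecidableEq V] [DecidableEq W]

theorem mem_leaves {T : BTree V} {u : V} : u ∈ T.leaves ↔ u ∈ T.leavesList :=
  List.mem_toFinset

theorem leaves_map (f : V → W) (T : BTree V) : (T.map f).leaves = T.leaves.image f := by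
  ext
  simp [leaves, leavesList_map]

theorem mem_leaves_caterpillar {S : BTree V} {L : List (BTree V)} {u : V} :
    u ∈ (caterpillar S L).leaves ↔ ∃ A ∈ S :: L, u ∈ A.leaves := by
  simp only [mem_leaves, leavesList_caterpillar, List.mem_flatMap]

theorem nodup_leavesList_caterpillar {S : BTree V} {L : List (BTree V)}
    (hdisj : (S :: L).Pairwise (fun A B => Disjoint A.leaves B.leaves))
    (hnodup : ∀ A ∈ S :: L, A.leavesList.Nodup) : (caterpillar S L).leavesList.Nodup := by
  rw [leavesList_caterpillar, List.nodup_flatMap]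
  exact ⟨hnodup, hdisj.imp List.disjoint_toFinset_iff_disjoint.1⟩

theorem cluster_node_of_mem_left {L R : BTree V} {u v : V} (hu : u ∈ L.leaves)
    (hv : v ∈ L.leaves) : (node L R).cluster u v = L.cluster u v := by
  rw [cluster, if_pos ⟨hu, hv⟩]

theorem cluster_node_of_mem_right {L R : BTree V} {u v : V} (huL : u ∉ L.leaves)
    (hu : u ∈ R.leaves) (hv : v ∈ R.leaves) : (node L R).cluster u v = R.cluster u v := by
  rw [cluster, if_neg (fun h => huL h.1), if_pos ⟨hu, hv⟩]

theorem cluster_map {f : V → W} (hf : Function.Injective f) :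
    ∀ (T : BTree V) (u v : V), (T.map f).cluster (f u) (f v) = (T.cluster u v).image f
  | leaf _, _, _ => by simp [map, cluster]
  | node L R, u, v => by
    have hmem : ∀ (T : BTree V) (x : V), f x ∈ (T.map f).leaves ↔ x ∈ T.leaves := fun T x => by
      rw [leaves_map, hf.mem_finset_image]
    simp only [map, cluster, hmem, cluster_map hf L, cluster_map hf R]
    split_ifs
    · rfl
    · rfl
    · exact leaves_map f (node L R)

theorem cluster_caterpillar :
    ∀ (S : BTree V) (L : List (BTree V)),
      (S :: L).Pairwise (fun A B => Disjoint A.leaves B.leaves) →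
      ∀ A ∈ S :: L, ∀ u ∈ A.leaves, ∀ v ∈ A.leaves, (caterpillar S L).cluster u v = A.cluster u v
  | S, [], _, A, hA, _, _, _, _ => by
    rw [List.mem_singleton.1 hA]; rfl
  | S, S' :: L, hdisj, A, hA, u, hu, v, hv => by
    rcases List.mem_cons.1 hA with rfl | hA
    · exact cluster_node_of_mem_left hu hv
    · have huS : u ∉ S.leaves := Finset.disjoint_right.1 (List.rel_of_pairwise_cons hdisj hA) hu
      rw [caterpillar, cluster_node_of_mem_right huS (mem_leaves_caterpillar.2 ⟨A, hA, hu⟩)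
        (mem_leaves_caterpillar.2 ⟨A, hA, hv⟩)]
      exact cluster_caterpillar S' L hdisj.of_cons A hA u hu v hv

end BTree

open BTree

section

variable {V : Type} [Fintype V] [DecidableEq V]

theorem exists_isHC [Nonempty V] : ∃ T : BTree V, IsHC T := by
  obtain ⟨x, l, hl⟩ := List.exists_cons_of_ne_nil
    (Finset.univ_nonempty (α := V)).toList_ne_nil
  have hleaves : (caterpillar (leaf x) (l.map leaf)).leavesList = x :: l := by
    rw [leavesList_caterpillar, ← List.map_cons, List.flatMap_map]
    simp [leavesList]
  refine ⟨caterpillar (leaf x) (l.map leaf), ?_, ?_⟩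
  · rw [hleaves, ← hl]; exact Finset.nodup_toList _
  · rw [leaves, hleaves, ← hl, Finset.toList_toFinset]

theorem IsHC.nodup_map_val {p : V → Prop} [DecidablePred p] {T : BTree {x // p x}}
    (hT : IsHC T) : (T.map Subtype.val).leavesList.Nodup := by
  rw [leavesList_map]
  exact hT.1.map Subtype.val_injective

theorem IsHC.mem_leaves_map_val {p : V → Prop} [DecidablePred p] {T : BTree {x // p x}}
    (hT : IsHC T) (u : V) : u ∈ (T.map Subtype.val).leaves ↔ p u := by
  simp [leaves_map, hT.2]

theorem cost_nonneg {w : V → V → ℝ} (hw : ∀ u v, 0 ≤ w u v) (T : BTree V) : 0 ≤ cost w T := by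
  unfold cost
  exact mul_nonneg (by norm_num) (Finset.sum_nonneg fun u _ => Finset.sum_nonneg fun v _ =>
    mul_nonneg (hw u v) (Nat.cast_nonneg _))

theorem optCost_le_cost {w : V → V → ℝ} (hw : ∀ u v, 0 ≤ w u v) {T : BTree V} (hT : IsHC T) :
    optCost w ≤ cost w T :=
  csInf_le ⟨0, by rintro _ ⟨T, -, rfl⟩; exact cost_nonneg hw T⟩ ⟨T, hT, rfl⟩

theorem exists_isHC_cost_lt_optCost_add [Nonempty V] (w : V → V → ℝ) {ε : ℝ} (hε : 0 < ε) :
    ∃ T : BTree V, IsHC T ∧ cost w T < optCost w + ε := by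
  obtain ⟨T, hT⟩ := exists_isHC (V := V)
  obtain ⟨_, ⟨T, hT, rfl⟩, hlt⟩ := Real.lt_sInf_add_pos
    (⟨_, T, hT, rfl⟩ : {c | ∃ T : BTree V, IsHC T ∧ cost w T = c}.Nonempty) hε
  exact ⟨T, hT, hlt⟩

theorem cost_eq_sum_of_card_cluster_eq {ι : Type} [Fintype ι] [DecidableEq ι] (b : V → ι)
    {w : V → V → ℝ} (hcross : ∀ u v, b u ≠ b v → w u v = 0) (T : BTree V)
    (Ts : ∀ i, BTree {x // b x = i})
    (hcard : ∀ i (u v : {x // b x = i}), (T.cluster u v).card = ((Ts i).cluster u v).card) :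
    cost w T = ∑ i, cost (fun u v : {x // b x = i} => w u v) (Ts i) := by
  simp only [cost, ← Finset.mul_sum]
  congr 1
  rw [← Fintype.sum_fiberwise b]
  refine Finset.sum_congr rfl fun i _ => Finset.sum_congr rfl fun u _ => ?_
  rw [← Fintype.sum_fiberwise b, Finset.sum_eq_single i]
  · simp only [hcard]
  · intro j _ hji
    refine Finset.sum_eq_zero fun v _ => ?_
    rw [hcross u v (by rw [u.2, v.2]; exact hji.symm), zero_mul]
  · simp

theorem optCost_le_sum_cost {m : ℕ} (hm : 1 ≤ m) (b : V → Fin m) {w : V → V → ℝ}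
    (hw : ∀ u v, 0 ≤ w u v) (hcross : ∀ u v, b u ≠ b v → w u v = 0)
    (Ts : ∀ i, BTree {x // b x = i}) (hTs : ∀ i, IsHC (Ts i)) :
    optCost w ≤ ∑ i, cost (fun u v : {x // b x = i} => w u v) (Ts i) := by
  obtain ⟨m, rfl⟩ := Nat.exists_eq_add_of_le' hm
  set S : Fin (m + 1) → BTree V := fun i => (Ts i).map Subtype.val
  have hS : ∀ i u, u ∈ (S i).leaves ↔ b u = i := fun i => (hTs i).mem_leaves_map_val
  set L := List.ofFn fun j : Fin m => S j.succ
  have hSL : S 0 :: L = List.ofFn S := List.ofFn_succ.symm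
  have hmem : ∀ i, S i ∈ S 0 :: L := fun i => hSL ▸ List.mem_ofFn.2 ⟨i, rfl⟩
  have hdisj : (S 0 :: L).Pairwise (fun A B => Disjoint A.leaves B.leaves) := by
    rw [hSL, List.pairwise_ofFn]
    exact fun i j hij => Finset.disjoint_left.2 fun u hi hj =>
      hij.ne (((hS i u).1 hi).symm.trans ((hS j u).1 hj))
  have hT : IsHC (caterpillar (S 0) L) := by
    refine ⟨nodup_leavesList_caterpillar hdisj fun A hA => ?_, Finset.eq_univ_of_forall fun u =>
      mem_leaves_caterpillar.2 ⟨S (b u), hmem _, (hS _ u).2 rfl⟩⟩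
    obtain ⟨i, rfl⟩ := List.mem_ofFn.1 (hSL ▸ hA)
    exact (hTs i).nodup_map_val
  refine (optCost_le_cost hw hT).trans_eq
    (cost_eq_sum_of_card_cluster_eq b hcross _ Ts fun i u v => ?_)
  rw [cluster_caterpillar _ _ hdisj (S i) (hmem i) u ((hS i u).2 u.2) v ((hS i v).2 v.2),
    cluster_map Subtype.val_injective, Finset.card_image_of_injective _ Subtype.val_injective]

end

/-- If `V` is partitioned into nonempty parts `V_1,…,V_m` (given by
`b : V → Fin m`, surjective) and the weighted graph `G = (V,w)` has no weight between
different parts, then `ω_G* ≤ Σ_i ω_{G_i}*`, where `G_i` is the induced weighted graph on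
part `i` (a one-vertex part having optimal cost 0). -/
theorem optCost_disjoint_union_le (V : Type) [Fintype V] [DecidableEq V] (m : ℕ)
    (hm : 1 ≤ m) (b : V → Fin m) (hsurj : ∀ i : Fin m, ∃ v : V, b v = i)
    (w : V → V → ℝ) (hw : IsWeight w) (hcross : ∀ u v : V, b u ≠ b v → w u v = 0) :
    optCost w ≤ ∑ i : Fin m, optCost (fun u v : {x : V // b x = i} => w u v) := by
  have hm0 : (0 : ℝ) < m := by exact_mod_cast hm
  refine le_of_forall_pos_le_add fun ε hε => ?_
  choose Ts hTs hlt using fun i =>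
    have : Nonempty {x : V // b x = i} := nonempty_subtype.2 (hsurj i)
    exists_isHC_cost_lt_optCost_add (fun u v : {x : V // b x = i} => w u v) (div_pos hε hm0)
  calc optCost w ≤ ∑ i, cost (fun u v : {x : V // b x = i} => w u v) (Ts i) :=
        optCost_le_sum_cost hm b hw.1 hcross Ts hTs
    _ ≤ ∑ i, (optCost (fun u v : {x : V // b x = i} => w u v) + ε / m) :=
        Finset.sum_le_sum fun i _ => (hlt i).le
    _ = ∑ i, optCost (fun u v : {x : V // b x = i} => w u v) + ε := by
        rw [Finset.sum_add_distrib, Finset.sum_const, Finset.card_univ, Fintype.card_fin,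
          nsmul_eq_mul, mul_div_cancel₀ _ hm0.ne']
end
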